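/- arXiv:1006.4245 — 2 statements merged into one kernel-verified Lean document; each statement's English description precedes it below -/
import Mathlib

section
/- Every function holomorphic on the complement of the origin in ℂ² extends holomorphically across the origin: if f : ℂ² → ℂ is complex differentiable at every point of ℂ² ∖ {0}, then there exists a function F : ℂ² → ℂ that is complex differentiable at every point of ℂ² and agrees with f on ℂ² ∖ {0}. -/
/-!
The Cauchy integral `G (z, w) = (2πi)⁻¹ ∮_{|ζ| = 1} f (ζ, w) / (ζ - z) dζ` only evaluates `f` on
`{|ζ| = 1} × ℂ`, away from the origin, so it is continuous on `{|z| < 1} × ℂ`. By the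
one-variable Cauchy formula it agrees with `f` there when `w ≠ 0`, hence by continuity everywhere
except at the origin. So `f` has a limit at `0`, and filling in that value gives a continuous
function that is holomorphic off one point. Its restrictions to the coordinate lines are then
holomorphic by Riemann's removable singularity theorem, and a continuous, separately holomorphic
function is holomorphic (Osgood's lemma: by the Cauchy formula for derivatives, its partial
derivatives are continuous).
-/

open Complex Metric Set Filter Function ContinuousLinearMap
open scoped Real Topology

variable {E : Type*} [NormedAddCommGroup E] [NormedSpace ℂ E]

theorem continuous_circleIntegral {X : Type*} [TopologicalSpace X] {c : X → ℂ} {R : ℝ}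
    {g : X → ℂ → E} (hc : Continuous c) (hR : 0 ≤ R)
    (hg : ∀ x, ∀ ζ ∈ sphere (c x) R, ContinuousAt ↿g (x, ζ)) :
    Continuous fun x => ∮ ζ in C(c x, R), g x ζ := by
  simp only [circleIntegral, deriv_circleMap]
  refine intervalIntegral.continuous_parametric_intervalIntegral_of_continuous' ?_ 0 (2 * π)
  refine continuous_iff_continuousAt.2 fun p => ?_
  let onCircle : X × ℝ → X × ℂ := fun q => (q.1, circleMap (c q.1) R q.2)
  have hmap : ContinuousAt onCircle p := by
    simp only [onCircle, circleMap]; fun_prop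
  exact (((continuous_circleMap 0 R).comp continuous_snd).mul continuous_const).continuousAt.smul
    ((hg p.1 _ (circleMap_mem_sphere _ hR p.2)).comp (f := onCircle) hmap)

noncomputable def cauchyIntegralFst (f : ℂ × ℂ → E) (p : ℂ × ℂ) : E :=
  (2 * π * I)⁻¹ • ∮ ζ in C(0, 1), (ζ - p.1)⁻¹ • f (ζ, p.2)

theorem continuousOn_cauchyIntegralFst {f : ℂ × ℂ → E}
    (hf : ∀ p : ℂ × ℂ, p ≠ 0 → ContinuousAt f p) :
    ContinuousOn (cauchyIntegralFst f) (ball 0 1 ×ˢ univ) := by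
  rw [continuousOn_iff_continuous_domRestrict]
  refine (continuous_circleIntegral continuous_const zero_le_one fun x ζ hζ => ?_).const_smul _
  have hζ₀ : ζ ≠ 0 := ne_of_mem_sphere hζ one_ne_zero
  have hζx : ζ - (x : ℂ × ℂ).1 ≠ 0 :=
    sub_ne_zero.2 fun h => (mem_ball.1 x.2.1).ne (h ▸ mem_sphere.1 hζ)
  have hfx : ContinuousAt f (ζ, (x : ℂ × ℂ).2) := hf _ fun h => hζ₀ (congrArg Prod.fst h)
  change ContinuousAt (fun q : (ball (0 : ℂ) 1 ×ˢ univ : Set (ℂ × ℂ)) × ℂ =>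
    (q.2 - (q.1 : ℂ × ℂ).1)⁻¹ • f (q.2, (q.1 : ℂ × ℂ).2)) (x, ζ)
  fun_prop (disch := assumption)

variable [CompleteSpace E]

theorem continuous_deriv_fst {f : ℂ × ℂ → E} (hf : Continuous f)
    (hd : ∀ p : ℂ × ℂ, DifferentiableAt ℂ (fun z => f (z, p.2)) p.1) :
    Continuous fun p : ℂ × ℂ => deriv (fun z => f (z, p.2)) p.1 := by
  have hcauchy : ∀ p : ℂ × ℂ, deriv (fun z => f (z, p.2)) p.1 =
      (2 * π * I)⁻¹ • ∮ ζ in C(p.1, 1), (1 / (ζ - p.1) ^ 2) • f (ζ, p.2) := fun p => by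
    rw [DifferentiableOn.deriv_eq_smul_circleIntegral one_pos
      fun z _ => (hd (z, p.2)).differentiableWithinAt, smul_smul,
      inv_mul_cancel₀ two_pi_I_ne_zero, one_smul]
  simp only [hcauchy]
  refine (continuous_circleIntegral continuous_fst zero_le_one fun p ζ hζ => ?_).const_smul _
  have hζ : ζ - p.1 ≠ 0 := sub_ne_zero.2 (ne_of_mem_sphere hζ one_ne_zero)
  change ContinuousAt (fun q : (ℂ × ℂ) × ℂ => (1 / (q.2 - q.1.1) ^ 2) • f (q.2, q.1.2)) (p, ζ)
  fun_prop (disch := exact pow_ne_zero 2 hζ)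

theorem differentiable_of_continuous_of_separately_differentiable {f : ℂ × ℂ → E} (hf : Continuous f)
    (h₁ : ∀ p : ℂ × ℂ, DifferentiableAt ℂ (fun z => f (z, p.2)) p.1)
    (h₂ : ∀ p : ℂ × ℂ, DifferentiableAt ℂ (fun w => f (p.1, w)) p.2) :
    Differentiable ℂ f := by
  have hc₁ := continuous_deriv_fst hf h₁
  have hc₂ : Continuous fun p : ℂ × ℂ => deriv (fun w => f (p.1, w)) p.2 :=
    (continuous_deriv_fst (hf.comp continuous_swap) fun p => h₂ p.swap).comp continuous_swap
  intro u
  exact (hasStrictFDerivAt_uncurry_coprod (f := fun z w => f (z, w))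
    (f₁ := fun z w => toSpanSingleton ℂ (deriv (fun z => f (z, w)) z))
    (f₂ := fun z w => toSpanSingleton ℂ (deriv (fun w => f (z, w)) w))
    (Eventually.of_forall fun v => (h₁ v).hasDerivAt.hasFDerivAt)
    (Eventually.of_forall fun v => (h₂ v).hasDerivAt.hasFDerivAt)
    ((toSpanSingletonLIE ℂ E).continuous.comp hc₁).continuousAt
    ((toSpanSingletonLIE ℂ E).continuous.comp hc₂).continuousAt).differentiableAt

theorem differentiable_of_continuous_of_differentiableAt_ne {g : ℂ → E} {c : ℂ}
    (hg : Continuous g) (hd : ∀ z, z ≠ c → DifferentiableAt ℂ g z) : Differentiable ℂ g :=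
  differentiableOn_univ.1 <| (differentiableOn_compl_singleton_and_continuousAt_iff univ_mem).1
    ⟨fun z hz => (hd z hz.2).differentiableWithinAt, hg.continuousAt⟩

theorem differentiable_prod_of_continuous_of_differentiableAt_ne {f : ℂ × ℂ → E} {c : ℂ × ℂ}
    (hf : Continuous f) (hd : ∀ p, p ≠ c → DifferentiableAt ℂ f p) : Differentiable ℂ f := by
  refine differentiable_of_continuous_of_separately_differentiable hf (fun p => ?_) fun p => ?_
  · refine differentiable_of_continuous_of_differentiableAt_ne (c := c.1) (by fun_prop)
      (fun z hz => ?_) p.1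
    exact (hd (z, p.2) fun h => hz (congrArg Prod.fst h)).comp z (by fun_prop)
  · refine differentiable_of_continuous_of_differentiableAt_ne (c := c.2) (by fun_prop)
      (fun w hw => ?_) p.2
    exact (hd (p.1, w) fun h => hw (congrArg Prod.snd h)).comp w (by fun_prop)

section CauchyIntegralFst

variable {f : ℂ × ℂ → E}

theorem cauchyIntegralFst_eq_of_snd_ne (hf : ∀ p : ℂ × ℂ, p ≠ 0 → DifferentiableAt ℂ f p)
    {p : ℂ × ℂ} (h₁ : p.1 ∈ ball 0 1) (h₂ : p.2 ≠ 0) : cauchyIntegralFst f p = f p :=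
  have hd : Differentiable ℂ fun z => f (z, p.2) := fun z =>
    (hf (z, p.2) fun h => h₂ (congrArg Prod.snd h)).comp z (by fun_prop)
  hd.diffContOnCl.two_pi_i_inv_smul_circleIntegral_sub_inv_smul h₁

theorem cauchyIntegralFst_eq (hf : ∀ p : ℂ × ℂ, p ≠ 0 → DifferentiableAt ℂ f p)
    {p : ℂ × ℂ} (h₁ : p.1 ∈ ball 0 1) (hp : p ≠ 0) : cauchyIntegralFst f p = f p := by
  rcases ne_or_eq p.2 0 with h₂ | h₂
  · exact cauchyIntegralFst_eq_of_snd_ne hf h₁ h₂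
  have hslice : Tendsto (fun w => (p.1, w)) (𝓝[≠] 0) (𝓝 p) :=
    ((Continuous.prodMk_right p.1).tendsto' 0 p (Prod.ext rfl h₂.symm)).mono_left
      nhdsWithin_le_nhds
  have hG : ContinuousAt (cauchyIntegralFst f) p :=
    (continuousOn_cauchyIntegralFst fun q hq => (hf q hq).continuousAt).continuousAt
      (prod_mem_nhds (isOpen_ball.mem_nhds h₁) univ_mem)
  refine tendsto_nhds_unique (hG.tendsto.comp hslice)
    (((hf p hp).continuousAt.tendsto.comp hslice).congr' ?_)
  filter_upwards [self_mem_nhdsWithin] with w hw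
  exact (cauchyIntegralFst_eq_of_snd_ne (p := (p.1, w)) hf h₁ hw).symm

theorem tendsto_nhdsNE_cauchyIntegralFst (hf : ∀ p : ℂ × ℂ, p ≠ 0 → DifferentiableAt ℂ f p) :
    Tendsto f (𝓝[≠] 0) (𝓝 (cauchyIntegralFst f 0)) := by
  have hU : ball (0 : ℂ) 1 ×ˢ univ ∈ 𝓝 (0 : ℂ × ℂ) :=
    prod_mem_nhds (ball_mem_nhds 0 one_pos) univ_mem
  refine (((continuousOn_cauchyIntegralFst fun q hq => (hf q hq).continuousAt).continuousAt
    hU).tendsto.mono_left nhdsWithin_le_nhds).congr' ?_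
  filter_upwards [nhdsWithin_le_nhds hU, self_mem_nhdsWithin] with p hpU hp
  exact cauchyIntegralFst_eq hf hpU.1 hp

end CauchyIntegralFst

/-- Hartogs-type extension across an isolated point in `ℂ²`:
a function holomorphic on `ℂ² ∖ {0}` extends holomorphically to all of `ℂ²`. -/
theorem extension_across_isolated_point
    (f : ℂ × ℂ → ℂ)
    (hf : ∀ z : ℂ × ℂ, z ≠ 0 → DifferentiableAt ℂ f z) :
    ∃ F : ℂ × ℂ → ℂ, Differentiable ℂ F ∧ ∀ z : ℂ × ℂ, z ≠ 0 → F z = f z := by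
  classical
  set F := update f 0 (cauchyIntegralFst f 0)
  have hF : ∀ p : ℂ × ℂ, p ≠ 0 → F =ᶠ[𝓝 p] f := fun p hp =>
    (eventually_ne_nhds hp).mono fun q hq => update_of_ne hq _ _
  refine ⟨F, differentiable_prod_of_continuous_of_differentiableAt_ne (c := 0) ?_
    fun p hp => (hf p hp).congr_of_eventuallyEq (hF p hp), fun z hz => update_of_ne hz _ _⟩
  refine continuous_iff_continuousAt.2 fun p => ?_
  rcases eq_or_ne p 0 with rfl | hp
  · exact continuousAt_update_same.2 (tendsto_nhdsNE_cauchyIntegralFst hf)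
  · exact (hf p hp).continuousAt.congr (hF p hp).symm
end

section
/- Let n ≥ 2 and let Σ ⊆ ℂⁿ be a complex linear subspace of complex dimension at most n − 2 (i.e., of complex codimension at least 2). If f : ℂⁿ → ℂ is complex differentiable at every point of ℂⁿ ∖ Σ, then there exists a function F : ℂⁿ → ℂ that is complex differentiable at every point of ℂⁿ and agrees with f on ℂⁿ ∖ Σ. -/
/-!
Choose a linear form `ℓ` vanishing on `S` and a vector `v` with `ℓ v = 1`. For each `z`, restrict
`f` to the complex line `w ↦ z + (w - ℓ z) • v` and take the Cauchy integral over a circle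
`|w| = r` with `r > ‖ℓ z‖`. The circle lies in `{ℓ ≠ 0}`, hence off `S`, so the integral does not
depend on `r` (Cauchy's theorem on an annulus) and is holomorphic in `z` (differentiation under the
integral sign, the Cauchy estimates bounding the derivative). When the whole line misses `S`,
which is the case for `z` off the subspace `S ⊔ ℂ v`, proper since `S` has codimension at least 2,
the Cauchy formula gives back `f z`; density and continuity then give `f z` on all of `Sᶜ`.
-/

open Metric Set Function Complex Real Topology

section Holomorphic

variable {E F : Type*} [NormedAddCommGroup E] [NormedSpace ℂ E]
  [NormedAddCommGroup F] [NormedSpace ℂ F]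

theorem norm_fderiv_le_of_forall_mem_ball_norm_le {f : E → F} {c : E} {r M : ℝ}
    (hd : DifferentiableOn ℂ f (ball c r)) (hr : 0 < r) (hM : ∀ z ∈ ball c r, ‖f z‖ ≤ M) :
    ‖fderiv ℂ f c‖ ≤ 2 * M / r := by
  refine Complex.norm_fderiv_le_div_of_mapsTo_ball hd (fun z hz ↦ ?_) hr
  rw [mem_closedBall, dist_eq_norm]
  linarith [norm_sub_le (f z) (f c), hM z hz, hM c (mem_ball_self hr)]

theorem exists_closedBall_prod_subset_and_bound {X Y Z : Type*} [PseudoMetricSpace X]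
    [ProperSpace X] [TopologicalSpace Y] [SeminormedAddCommGroup Z] {g : X × Y → Z}
    {V : Set (X × Y)} (hV : IsOpen V) (hg : ContinuousOn g V) {x₀ : X} {K : Set Y}
    (hK : IsCompact K) (hx₀ : ∀ w ∈ K, (x₀, w) ∈ V) :
    ∃ δ > 0, ∃ M, ∀ x ∈ closedBall x₀ δ, ∀ w ∈ K, (x, w) ∈ V ∧ ‖g (x, w)‖ ≤ M := by
  have hnhds : ∀ᶠ x in 𝓝 x₀, ∀ w ∈ K, (x, w) ∈ V :=
    hK.eventually_forall_of_forall_eventually fun w hw ↦ hV.mem_nhds (hx₀ w hw)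
  obtain ⟨ε, hε, hball⟩ := Metric.eventually_nhds_iff_ball.1 hnhds
  have hsub : closedBall x₀ (ε / 2) ×ˢ K ⊆ V := fun p ⟨hp₁, hp₂⟩ ↦
    hball p.1 (closedBall_subset_ball (half_lt_self hε) hp₁) p.2 hp₂
  obtain ⟨M, hM⟩ := ((isCompact_closedBall x₀ (ε / 2)).prod hK).exists_bound_of_continuousOn
    (hg.mono hsub)
  exact ⟨ε / 2, half_pos hε, M, fun x hx w hw ↦ ⟨hsub ⟨hx, hw⟩, hM (x, w) ⟨hx, hw⟩⟩⟩

theorem differentiableAt_circleIntegral_of_differentiableOn_uncurry [FiniteDimensional ℂ E]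
    [CompleteSpace F] [SecondCountableTopology F] {g : E → ℂ → F} {V : Set (E × ℂ)}
    (hV : IsOpen V) (hg : DifferentiableOn ℂ (uncurry g) V) {x₀ : E} {c : ℂ} {R : ℝ}
    (hx₀ : ∀ w ∈ sphere c |R|, (x₀, w) ∈ V) :
    DifferentiableAt ℂ (fun x ↦ ∮ w in C(c, R), g x w) x₀ := by
  borelize E
  obtain ⟨δ, hδ, M, hVM⟩ := exists_closedBall_prod_subset_and_bound hV hg.continuousOn
    (isCompact_sphere c |R|) hx₀
  have hdiff : ∀ x ∈ closedBall x₀ δ, ∀ w ∈ sphere c |R|,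
      HasFDerivAt (g · w) ((fderiv ℂ (uncurry g) (x, w)).comp (.inl ℂ E ℂ)) x := fun x hx w hw ↦
    (hg.differentiableAt (hV.mem_nhds (hVM x hx w hw).1)).hasFDerivAt.comp (g := uncurry g) x
      (hasFDerivAt_prodMk_left (𝕜 := ℂ) x w)
  -- The Cauchy estimates turn the bound on `g` into a bound on its derivative in `x`.
  have hbound : ∀ x ∈ ball x₀ (δ / 2), ∀ w ∈ sphere c |R|,
      ‖(fderiv ℂ (uncurry g) (x, w)).comp (.inl ℂ E ℂ)‖ ≤ 2 * M / (δ / 2) := by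
    intro x hx w hw
    have hsub : ball x (δ / 2) ⊆ closedBall x₀ δ := by
      refine (ball_subset_ball' ?_).trans ball_subset_closedBall
      linarith [mem_ball.1 hx]
    rw [← (hdiff x (hsub (mem_ball_self (half_pos hδ))) w hw).fderiv]
    exact norm_fderiv_le_of_forall_mem_ball_norm_le
      (fun y hy ↦ (hdiff y (hsub hy) w hw).differentiableAt.differentiableWithinAt)
      (half_pos hδ) fun y hy ↦ (hVM y (hsub hy) w hw).2
  have hcont : ∀ x ∈ closedBall x₀ δ, Continuous fun θ ↦ g x (circleMap c R θ) := fun x hx ↦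
    hg.continuousOn.comp_continuous (by fun_prop) fun θ ↦
      (hVM x hx _ (circleMap_mem_sphere' c R θ)).1
  have hderiv : Continuous (deriv (circleMap c R)) := by
    rw [funext (deriv_circleMap c R)]; fun_prop
  refine (intervalIntegral.hasFDerivAt_integral_of_dominated_of_fderiv_le
    (F' := fun x θ ↦ deriv (circleMap c R) θ •
      (fderiv ℂ (uncurry g) (x, circleMap c R θ)).comp (.inl ℂ E ℂ))
    (bound := fun _ ↦ |R| * (2 * M / (δ / 2))) (ball_mem_nhds x₀ (half_pos hδ)) ?_ ?_ ?_ ?_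
    intervalIntegrable_const ?_).differentiableAt
  · filter_upwards [closedBall_mem_nhds x₀ hδ] with x hx
    exact (hderiv.smul (hcont x hx)).aestronglyMeasurable
  · exact (hderiv.smul (hcont x₀ (mem_closedBall_self hδ.le))).intervalIntegrable _ _
  · exact (hderiv.measurable.smul (by fun_prop)).aestronglyMeasurable
  · refine .of_forall fun θ _ x hx ↦ ?_
    rw [norm_smul, deriv_circleMap, norm_mul, norm_circleMap_zero, norm_I, mul_one]
    exact mul_le_mul_of_nonneg_left (hbound x hx _ (circleMap_mem_sphere' c R θ)) (abs_nonneg R)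
  · refine .of_forall fun θ _ x hx ↦ (hdiff x ?_ _ (circleMap_mem_sphere' c R θ)).const_smul _
    exact ball_subset_closedBall.trans (closedBall_subset_closedBall (half_le_self hδ.le)) hx

theorem circleIntegral_sub_inv_smul_congr_radius [CompleteSpace F] {h : ℂ → F} {c a : ℂ}
    (hh : ∀ w ≠ c, DifferentiableAt ℂ h w) {r R : ℝ} (ha : a ∈ ball c r) (hrR : r ≤ R) :
    (∮ w in C(c, R), (w - a)⁻¹ • h w) = ∮ w in C(c, r), (w - a)⁻¹ • h w := by
  have hdiff : ∀ w ∉ ball c r, DifferentiableAt ℂ (fun w ↦ (w - a)⁻¹ • h w) w := by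
    intro w hw
    have hwa : w - a ≠ 0 := sub_ne_zero.2 fun hwa ↦ hw (hwa ▸ ha)
    have hwc : w ≠ c := fun hwc ↦ hw (hwc ▸ mem_ball_self (pos_of_mem_ball ha))
    exact ((differentiableAt_id.sub_const a).inv hwa).smul (hh w hwc)
  exact circleIntegral_eq_of_differentiable_on_annulus_off_countable (pos_of_mem_ball ha) hrR
    countable_empty (fun w hw ↦ (hdiff w hw.2).continuousAt.continuousWithinAt)
    fun w hw ↦ hdiff w fun hwr ↦ hw.1.2 (ball_subset_closedBall hwr)

/-- The point of the line `z + ℂ v` at which `ℓ` takes the value `w` when `ℓ v = 1`: the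
coordinate-free analogue of `Function.update z i w`. -/
noncomputable def lineUpdate (ℓ : E →L[ℂ] ℂ) (v z : E) (w : ℂ) : E := z + (w - ℓ z) • v

noncomputable def cauchyExtension (ℓ : E →L[ℂ] ℂ) (v : E) (f : E → F) (r : ℝ) (z : E) : F :=
  (2 * π * I)⁻¹ • ∮ w in C(0, r), (w - ℓ z)⁻¹ • f (lineUpdate ℓ v z w)

section lineUpdate

variable {ℓ : E →L[ℂ] ℂ} {v : E}

theorem apply_lineUpdate (hv : ℓ v = 1) (z : E) (w : ℂ) : ℓ (lineUpdate ℓ v z w) = w := by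
  simp [lineUpdate, hv]

theorem lineUpdate_mem_iff {P : Submodule ℂ E} (hv : v ∈ P) (z : E) (w : ℂ) :
    lineUpdate ℓ v z w ∈ P ↔ z ∈ P :=
  P.add_mem_iff_left (P.smul_mem _ hv)

theorem lineUpdate_self (z : E) : lineUpdate ℓ v z (ℓ z) = z := by
  simp [lineUpdate]

theorem differentiable_lineUpdate (z : E) : Differentiable ℂ (lineUpdate ℓ v z) := by
  unfold lineUpdate; fun_prop

theorem differentiable_lineUpdate_uncurry :
    Differentiable ℂ fun q : E × ℂ ↦ lineUpdate ℓ v q.1 q.2 := by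
  unfold lineUpdate; fun_prop

end lineUpdate

section cauchyExtension

variable [CompleteSpace F] {ℓ : E →L[ℂ] ℂ} {v : E} {f : E → F}

theorem cauchyExtension_eq {z : E} (hf : ∀ w, DifferentiableAt ℂ f (lineUpdate ℓ v z w))
    {r : ℝ} (hz : ‖ℓ z‖ < r) : cauchyExtension ℓ v f r z = f z := by
  have hd : Differentiable ℂ fun w ↦ f (lineUpdate ℓ v z w) := fun w ↦
    (hf w).comp w (differentiable_lineUpdate z w)
  rw [cauchyExtension, hd.diffContOnCl.two_pi_i_inv_smul_circleIntegral_sub_inv_smul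
    (mem_ball_zero_iff.2 hz), lineUpdate_self]

theorem cauchyExtension_congr_radius (hv : ℓ v = 1)
    (hf : ∀ z, ℓ z ≠ 0 → DifferentiableAt ℂ f z) {z : E} {r R : ℝ} (hz : ‖ℓ z‖ < r)
    (hrR : r ≤ R) : cauchyExtension ℓ v f R z = cauchyExtension ℓ v f r z := by
  refine congrArg _ (circleIntegral_sub_inv_smul_congr_radius (fun w hw ↦ ?_)
    (mem_ball_zero_iff.2 hz) hrR)
  exact (hf _ (by rwa [apply_lineUpdate hv])).comp w (differentiable_lineUpdate z w)

theorem differentiableAt_cauchyExtension [FiniteDimensional ℂ E] [SecondCountableTopology F]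
    (hv : ℓ v = 1) (hf : ∀ z, ℓ z ≠ 0 → DifferentiableAt ℂ f z) {p : E} {r : ℝ}
    (hp : ‖ℓ p‖ < r) : DifferentiableAt ℂ (cauchyExtension ℓ v f r) p := by
  let V : Set (E × ℂ) := {q | q.2 ≠ 0} ∩ {q | q.2 ≠ ℓ q.1}
  have hV : IsOpen V :=
    (isOpen_ne_fun continuous_snd continuous_const).inter
      (isOpen_ne_fun continuous_snd (ℓ.continuous.comp continuous_fst))
  have hg : DifferentiableOn ℂ (fun q : E × ℂ ↦ (q.2 - ℓ q.1)⁻¹ • f (lineUpdate ℓ v q.1 q.2)) V :=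
    fun q ⟨hq₀, hq⟩ ↦ DifferentiableAt.differentiableWithinAt <|
      ((differentiableAt_snd.sub (ℓ.differentiableAt.comp q differentiableAt_fst)).inv
        (sub_ne_zero.2 hq)).smul
      ((hf _ (by rwa [apply_lineUpdate hv])).comp q (differentiable_lineUpdate_uncurry q))
  have hsphere : ∀ w ∈ sphere (0 : ℂ) |r|, (p, w) ∈ V := by
    intro w hw
    rw [mem_sphere_zero_iff_norm, abs_of_pos ((norm_nonneg _).trans_lt hp)] at hw
    exact ⟨ne_zero_of_norm_ne_zero (by linarith [norm_nonneg (ℓ p)]),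
      fun h : w = ℓ p ↦ by rw [h] at hw; linarith⟩
  exact (differentiableAt_circleIntegral_of_differentiableOn_uncurry
    (g := fun x w ↦ (w - ℓ x)⁻¹ • f (lineUpdate ℓ v x w)) hV hg hsphere).const_smul _

theorem differentiable_cauchyExtension [FiniteDimensional ℂ E] [SecondCountableTopology F]
    (hv : ℓ v = 1) (hf : ∀ z, ℓ z ≠ 0 → DifferentiableAt ℂ f z) :
    Differentiable ℂ fun z ↦ cauchyExtension ℓ v f (‖ℓ z‖ + 1) z := by
  intro p
  have hnear : ∀ᶠ z in 𝓝 p, ‖ℓ z‖ < ‖ℓ p‖ + 1 :=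
    (continuous_norm.comp ℓ.continuous).continuousAt.eventually_lt continuousAt_const (lt_add_one _)
  refine (differentiableAt_cauchyExtension hv hf (lt_add_one _)).congr_of_eventuallyEq ?_
  filter_upwards [hnear] with z hz
  rcases le_total (‖ℓ z‖ + 1) (‖ℓ p‖ + 1) with h | h
  · exact (cauchyExtension_congr_radius hv hf (lt_add_one _) h).symm
  · exact cauchyExtension_congr_radius hv hf hz h

end cauchyExtension

end Holomorphic

theorem Set.EqOn.of_diff_submodule {𝕜 X Z : Type*} [NontriviallyNormedField 𝕜]
    [NormedAddCommGroup X] [NormedSpace 𝕜 X] [TopologicalSpace Z] [T2Space Z]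
    {P : Submodule 𝕜 X} (hP : P ≠ ⊤) {U : Set X} (hU : IsOpen U) {f g : X → Z}
    (hf : ContinuousOn f U) (hg : ContinuousOn g U) (h : EqOn f g (U \ P)) : EqOn f g U := by
  have hdense : Dense (P : Set X)ᶜ := interior_eq_empty_iff_dense_compl.1 <|
    not_nonempty_iff_eq_empty.1 fun hne ↦ hP (P.eq_top_of_nonempty_interior' hne)
  exact h.of_subset_closure hf hg sdiff_subset (hdense.open_subset_closure_inter hU)

theorem Submodule.sup_span_singleton_ne_top {K V : Type*} [Field K] [AddCommGroup V]
    [Module K V] [FiniteDimensional K V] (S : Submodule K V)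
    (hS : Module.finrank K S + 2 ≤ Module.finrank K V) (v : V) : S ⊔ K ∙ v ≠ ⊤ := by
  intro htop
  have hsup := finrank_add_le_finrank_add_finrank S (K ∙ v)
  have hspan : Module.finrank K (K ∙ v) ≤ 1 :=
    (finrank_span_le_card ({v} : Set V)).trans (by simp)
  rw [htop, finrank_top] at hsup
  omega

/-- Extension of holomorphic functions on `ℂⁿ` across a complex linear subspace of
complex codimension at least 2. -/
theorem extension_across_codim_two_subspace
    (n : ℕ) (hn : 2 ≤ n)
    (S : Submodule ℂ (Fin n → ℂ)) (hS : Module.finrank ℂ S ≤ n - 2)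
    (f : (Fin n → ℂ) → ℂ)
    (hf : ∀ z : Fin n → ℂ, z ∉ S → DifferentiableAt ℂ f z) :
    ∃ F : (Fin n → ℂ) → ℂ, Differentiable ℂ F ∧
      ∀ z : Fin n → ℂ, z ∉ S → F z = f z := by
  have hS₂ : Module.finrank ℂ S + 2 ≤ Module.finrank ℂ (Fin n → ℂ) := by
    rw [Module.finrank_fin_fun]; omega
  obtain ⟨v, -, hvS⟩ := SetLike.exists_of_lt
    (ne_top_of_le_ne_top (S.sup_span_singleton_ne_top hS₂ 0) le_sup_left).lt_top
  obtain ⟨ℓ, hℓS, hℓv⟩ := LinearMap.exists_extend_of_notMem (0 : S →ₗ[ℂ] ℂ) hvS 1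
  let L := LinearMap.toContinuousLinearMap ℓ
  have hLS : ∀ z ∈ S, L z = 0 := fun z hz ↦ LinearMap.congr_fun hℓS ⟨z, hz⟩
  have hF := differentiable_cauchyExtension (ℓ := L) hℓv fun z hz ↦ hf z (mt (hLS z) hz)
  refine ⟨_, hF, Set.EqOn.of_diff_submodule (S.sup_span_singleton_ne_top hS₂ v)
    S.closed_of_finiteDimensional.isOpen_compl hF.continuous.continuousOn
    (fun z hz ↦ (hf z hz).continuousAt.continuousWithinAt) fun z hz ↦ ?_⟩
  refine cauchyExtension_eq (fun w ↦ hf _ fun hwS ↦ hz.2 ?_) (lt_add_one _)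
  exact (lineUpdate_mem_iff (Submodule.mem_sup_right (Submodule.mem_span_singleton_self v)) z
    w).1 (Submodule.mem_sup_left hwS)
end
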